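/- Bloch-ball characterization: for every v ∈ EuclideanSpace ℝ (Fin 3), the matrix ρ(v) is Hermitian with trace 1, and ρ(v) is positive semidefinite if and only if ‖v‖ ≤ 1. Thus the valid qubit states are exactly the coherence-vector matrices with v in the closed unit (Bloch) ball. -/

import Mathlib

open Matrix
open scoped ComplexOrder

/-- The Pauli matrix σx. -/
def pauliX : Matrix (Fin 2) (Fin 2) ℂ := !![0, 1; 1, 0]

/-- The Pauli matrix σy. -/
def pauliY : Matrix (Fin 2) (Fin 2) ℂ := !![0, -Complex.I; Complex.I, 0]

/-- The Pauli matrix σz. -/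
def pauliZ : Matrix (Fin 2) (Fin 2) ℂ := !![1, 0; 0, -1]

/-- The coherence-vector (Bloch) matrix associated to `v ∈ ℝ³`. -/
noncomputable def rho (v : EuclideanSpace ℝ (Fin 3)) : Matrix (Fin 2) (Fin 2) ℂ :=
  (1/2 : ℂ) • (1 + (v 0 : ℂ) • pauliX + (v 1 : ℂ) • pauliY + (v 2 : ℂ) • pauliZ)

private lemma key_ineq (p q r A B C D : ℝ) (hA : 0 ≤ A) (hB : 0 ≤ B) (hCD : C^2 + D^2 ≤ A*B)
    (hv : p^2+q^2+r^2 ≤ 1) : 0 ≤ (1+r)*A + (1-r)*B + 2*p*C + 2*q*D := by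
  nlinarith [sq_nonneg (p*(A-B) - 2*r*C), sq_nonneg (q*(A-B) - 2*r*D),
    sq_nonneg (2*p*D - 2*q*C), sq_nonneg (A+B + (r*(A-B) + 2*p*C + 2*q*D)),
    mul_nonneg (sub_nonneg.2 hv) (by positivity : (0:ℝ) ≤ (A-B)^2 + 4*C^2 + 4*D^2),
    sq_nonneg (A-B), sq_nonneg (A+B)]

private lemma form_eq (v : EuclideanSpace ℝ (Fin 3)) (x : Fin 2 → ℂ) :
    dotProduct (star x) (rho v *ᵥ x) =
      ((((1 + v 2) * ((x 0).re^2 + (x 0).im^2) + (1 - v 2) * ((x 1).re^2 + (x 1).im^2)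
        + 2 * v 0 * ((x 0).re*(x 1).re + (x 0).im*(x 1).im)
        + 2 * v 1 * ((x 0).re*(x 1).im - (x 0).im*(x 1).re)) / 2 : ℝ) : ℂ) := by
  simp [rho, pauliX, pauliY, pauliZ, dotProduct, mulVec, Fin.sum_univ_two,
    Matrix.add_apply, Matrix.smul_apply, Matrix.one_apply, Complex.ext_iff,
    Complex.add_re, Complex.add_im, Complex.mul_re, Complex.mul_im, ← Complex.ofReal_pow]
  constructor <;> ring

private lemma norm_sq_eq (v : EuclideanSpace ℝ (Fin 3)) :
    ‖v‖^2 = v 0 ^ 2 + v 1 ^ 2 + v 2 ^ 2 := by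
  rw [EuclideanSpace.norm_eq, Real.sq_sqrt (by positivity)]
  simp [Fin.sum_univ_three, Real.norm_eq_abs, sq_abs]

/-- **Bloch-ball characterization.** `rho v` is Hermitian with trace 1, and it is
positive semidefinite iff `‖v‖ ≤ 1`: the valid qubit states are exactly the
coherence-vector matrices with `v` in the closed unit (Bloch) ball. -/
theorem rho_isDensityMatrix_iff (v : EuclideanSpace ℝ (Fin 3)) :
    (rho v).IsHermitian ∧ (rho v).trace = 1 ∧ ((rho v).PosSemidef ↔ ‖v‖ ≤ 1) := by
  have herm : (rho v).IsHermitian := by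
    ext i j
    fin_cases i <;> fin_cases j <;>
      simp [rho, pauliX, pauliY, pauliZ, Matrix.conjTranspose_apply, Matrix.add_apply,
        Matrix.smul_apply, Matrix.one_apply, Complex.ext_iff] <;> ring
  refine ⟨herm, ?_, ?_⟩
  · simp [Matrix.trace, Fin.sum_univ_two, rho, pauliX, pauliY, pauliZ,
      Matrix.add_apply, Matrix.smul_apply, Matrix.one_apply]
    ring
  · constructor
    · intro hpsd
      by_contra hv
      push_neg at hv
      have hn2 : ‖v‖^2 = v 0 ^ 2 + v 1 ^ 2 + v 2 ^ 2 := norm_sq_eq v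
      set n := ‖v‖ with hn
      by_cases hz : n = v 2
      · -- then v 0 = v 1 = 0, test with x = (0,1)
        have h2 := hpsd.dotProduct_mulVec_nonneg ![0, 1]
        rw [form_eq] at h2
        rw [Complex.zero_le_real] at h2
        simp at h2
        nlinarith
      · have hle : v 2 ≤ n := by
          nlinarith [norm_nonneg v, sq_nonneg (v 0), sq_nonneg (v 1)]
        have hnv2 : v 2 < n := lt_of_le_of_ne hle (fun h => hz h.symm)
        set t := Real.sqrt (n - v 2) with htdef
        have ht2 : t^2 = n - v 2 := Real.sq_sqrt (by linarith)
        have htpos : 0 < t := Real.sqrt_pos.2 (by linarith)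
        have h2 := hpsd.dotProduct_mulVec_nonneg ![(t:ℂ), (↑(-v 0/t) + ↑(-v 1/t) * Complex.I)]
        rw [form_eq, Complex.zero_le_real] at h2
        simp only [Matrix.cons_val_zero, Matrix.cons_val_one, Matrix.head_cons,
          Complex.ofReal_re, Complex.ofReal_im, Complex.add_re, Complex.add_im,
          Complex.mul_re, Complex.mul_im, Complex.I_re, Complex.I_im] at h2
        have ht : t ≠ 0 := ne_of_gt htpos
        field_simp at h2
        replace h2 : 0 ≤ ((((1 + v 2) * t ^ 2 * t ^ 2 + (1 - v 2) * (v 0 ^ 2 + v 1 ^ 2)) * t +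
              -(2 * v 0 * (t * v 0) * t ^ 2)) * t + -(2 * v 1 * (t * v 1) * (t ^ 2 * t))) := by
          nlinarith [mul_le_mul_of_nonneg_left h2 (sq_nonneg t)]
        have hv01 : v 0 ^ 2 + v 1 ^ 2 = n ^ 2 - v 2 ^ 2 := by linarith
        have e : ((((1 + v 2) * t ^ 2 * t ^ 2 + (1 - v 2) * (v 0 ^ 2 + v 1 ^ 2)) * t +
              -(2 * v 0 * (t * v 0) * t ^ 2)) * t + -(2 * v 1 * (t * v 1) * (t ^ 2 * t))) =
            (n - v 2) ^ 2 * (2 * n - 2 * n ^ 2) := by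
          linear_combination ((1 + v 2) * (t ^ 4 + t ^ 2 * (n - v 2) + (n - v 2) ^ 2) -
              2 * (v 0 ^ 2 + v 1 ^ 2) * (t ^ 2 + (n - v 2)) +
              (1 - v 2) * (v 0 ^ 2 + v 1 ^ 2)) * ht2 +
            ((1 - v 2) * (n - v 2) - 2 * (n - v 2) ^ 2) * hv01
        rw [e] at h2
        nlinarith [mul_pos (mul_pos (sub_pos.2 hnv2) (sub_pos.2 hnv2)) (by nlinarith : (0:ℝ) < 2 * n ^ 2 - 2 * n)]
    · intro hv
      refine Matrix.PosSemidef.of_dotProduct_mulVec_nonneg herm fun x => ?_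
      rw [form_eq, Complex.zero_le_real]
      have hv2 : v 0 ^ 2 + v 1 ^ 2 + v 2 ^ 2 ≤ 1 := by
        have := norm_sq_eq v
        nlinarith [norm_nonneg v]
      have := key_ineq (v 0) (v 1) (v 2) ((x 0).re^2 + (x 0).im^2) ((x 1).re^2 + (x 1).im^2)
        ((x 0).re*(x 1).re + (x 0).im*(x 1).im) ((x 0).re*(x 1).im - (x 0).im*(x 1).re)
        (by positivity) (by positivity) (by nlinarith [sq_nonneg ((x 0).re*(x 1).im - (x 0).im*(x 1).re)] ) hv2
      linarith
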